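/- Let U, V, W be finite sets, and fix a set R of representatives of the equivalence classes of recollements of the pair (U, W). For any recollement C of (U, V) and any recollement D of (V, W), there exists a family of polynomials P^E_{C,D} ∈ ℤ[T], indexed by E ∈ R, such that for every n ∈ ℕ the composite (D) ∘ (C) : ℂ[Inj(U, Fin n)] → ℂ[Inj(W, Fin n)] equals the sum over E ∈ R of P^E_{C,D}(n) · (E). Here, for a recollement (C, u, v) of two finite sets U', V', the map (C) : ℂ[Inj(U', Fin n)] → ℂ[Inj(V', Fin n)] sends e_f to the sum of e_{h∘v} over all h ∈ Inj(C, Fin n) with h ∘ u = f. -/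

import Mathlib

/-- A recollement of a pair of finite sets `U, V`: a finite set `C` together with
injections `u : U ↪ C`, `v : V ↪ C` whose images cover `C`. -/
structure Recollement (U V : Type) : Type 1 where
  C : Type
  [fintypeC : Fintype C]
  u : U ↪ C
  v : V ↪ C
  covers : ∀ c : C, (∃ x, u x = c) ∨ (∃ y, v y = c)

attribute [instance] Recollement.fintypeC

/-- Two recollements are equivalent if there is a bijection of the underlying sets
commuting with the injections from `U` and from `V`. -/
def Recollement.Equivalent {U V : Type} (r₁ r₂ : Recollement U V) : Prop :=
  ∃ e : r₁.C ≃ r₂.C, (∀ x, e (r₁.u x) = r₂.u x) ∧ (∀ y, e (r₁.v y) = r₂.v y)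

open scoped Classical in
/-- The linear map `(C) : ℂ[Inj(U, Fin n)] → ℂ[Inj(V, Fin n)]` associated to a
recollement `(C, u, v)` of `(U, V)`: it sends the basis vector `e_f` to the sum of
`e_{h ∘ v}` over all injections `h : C ↪ Fin n` with `h ∘ u = f`. -/
noncomputable def recMap (U V : Type) [Fintype U] [Fintype V] (n : ℕ)
    (r : Recollement U V) :
    ((U ↪ Fin n) →₀ ℂ) →ₗ[ℂ] ((V ↪ Fin n) →₀ ℂ) :=
  Finsupp.lift ((V ↪ Fin n) →₀ ℂ) ℂ (U ↪ Fin n) fun f =>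
    ∑ h : r.C ↪ Fin n, if (∀ x, h (r.u x) = f x) then Finsupp.single (r.v.trans h) 1
      else 0

/-!
The coefficient of `e_g` in `(D) ∘ (C) e_f` counts pairs of injections `h : C ↪ Fin n`,
`k : D ↪ Fin n` with `h ∘ u_C = f`, `k ∘ u_D = h ∘ v_C` and `k ∘ v_D = g`, i.e. maps
`φ : C ⊕ D → Fin n` with prescribed values on `U ⊕ W` whose kernel glues `C` and `D`
along `V`. The maps with a given kernel `r` are the injections of `(C ⊕ D)/r` extending a
fixed injection of the image of `U ⊕ W`; there are `(n - e)(n - e - 1)⋯` of them, with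
`|(C ⊕ D)/r| - e` factors, where `e = |im f ∪ im g|`. Both `e` and the kernels that occur only
depend on the kernel of `[f, g] : U ⊕ W → Fin n`, that is, on the class of the recollement of
`(U, W)` realized by `(f, g)`; and that class is the unique `E ∈ R` for which the coefficient of
`(E)` at `(f, g)` is non-zero (it is then `1`).
-/

open Function Set Setoid

open scoped Classical

noncomputable instance Setoid.instFintype {α : Type*} [Finite α] : Fintype (Setoid α) :=
  have : Finite (Setoid α) := Finite.of_injective _ fun _ _ => eq_iff_rel_eq.2
  Fintype.ofFinite _

section Counting

variable {Q S X Y : Type*}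

theorem card_range_eq_of_ker_eq {κ : S → Q} {j : S → Y} (h : ker κ = ker j) :
    Nat.card (range κ) = Nat.card (range j) :=
  Nat.card_congr <| (quotientKerEquivRange κ).symm.trans <|
    (Quotient.congrRight fun a b => by rw [h]).trans (quotientKerEquivRange j)

theorem ker_embedding_comp (ψ : Q ↪ Y) (κ : S → Q) : ker (ψ ∘ κ) = ker κ :=
  Setoid.ext fun _ _ => by simp only [ker_def, comp_apply, ψ.injective.eq_iff]

variable [Fintype Q] [Fintype X] [Fintype Y]

theorem card_embedding_extending (A : Set Q) (j : A ↪ Y) :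
    Nat.card {ψ : Q ↪ Y // ∀ a : A, ψ a = j a} =
      (Nat.card Y - Nat.card A).descFactorial (Nat.card Q - Nat.card A) := by
  let e : (Q ↪ Y) ≃ Σ f : A ↪ Y, (↥Aᶜ ↪ ↥(range f)ᶜ) :=
    (Equiv.embeddingCongr (Equiv.Set.sumCompl A) (Equiv.refl Y)).symm.trans
      Equiv.sumEmbeddingEquivSigmaEmbeddingRestricted
  have he : ∀ ψ, (∀ a : A, ψ a = j a) ↔ (e ψ).1 = j := fun ψ => by
    rw [Embedding.ext_iff]; rfl
  rw [Nat.card_congr ((Equiv.subtypeEquiv e he).trans (Equiv.sigmaSubtype j)),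
    Nat.card_eq_fintype_card, Fintype.card_embedding_eq, Fintype.card_compl_set,
    Fintype.card_compl_set, Fintype.card_range]
  simp only [Nat.card_eq_fintype_card]

theorem card_embedding_comp_eq (κ : S → Q) (j : S → Y) :
    Nat.card {ψ : Q ↪ Y // ⇑ψ ∘ κ = j} =
      if ker κ = ker j then
        (Nat.card Y - Nat.card (range κ)).descFactorial (Nat.card Q - Nat.card (range κ))
      else 0 := by
  split_ifs with h
  · have hker : ∀ s t, κ s = κ t ↔ j s = j t := fun s t => by
      simpa only [ker_def] using Setoid.ext_iff.1 h s t
    let j' : range κ ↪ Y := ⟨j ∘ rangeSplitting κ, fun a b hab => Subtype.ext <| by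
      rw [← apply_rangeSplitting κ a, ← apply_rangeSplitting κ b]
      exact (hker _ _).2 hab⟩
    have hj' : ∀ s, j' ⟨κ s, s, rfl⟩ = j s := fun s =>
      (hker _ _).1 (apply_rangeSplitting κ ⟨κ s, s, rfl⟩)
    have hext : ∀ ψ : Q ↪ Y, ⇑ψ ∘ κ = j ↔ ∀ a : range κ, ψ a = j' a := fun ψ =>
      ⟨fun hψ a => by
        conv_lhs => rw [← apply_rangeSplitting κ a]
        exact congrFun hψ _,
       fun hψ => funext fun s => (hψ ⟨κ s, s, rfl⟩).trans (hj' s)⟩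
    rw [Nat.card_congr (Equiv.subtypeEquivRight hext), card_embedding_extending]
  · rw [Nat.card_eq_zero]
    exact .inl ⟨fun ⟨ψ, hψ⟩ => h (hψ ▸ ker_embedding_comp ψ κ).symm⟩

noncomputable def kerEqEquivEmbedding (r : Setoid X) :
    {φ : X → Y // ker φ = r} ≃ (Quotient r ↪ Y) where
  toFun φ := ⟨Quotient.lift φ.1 fun a b hab => ker_def.1 (by rw [φ.2]; exact hab), by
    rintro ⟨a⟩ ⟨b⟩ hab
    exact Quotient.sound (φ.2 ▸ ker_def.2 hab)⟩
  invFun ψ := ⟨ψ ∘ Quotient.mk r, by rw [ker_embedding_comp, ker_mk_eq]⟩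
  left_inv φ := rfl
  right_inv ψ := by ext ⟨a⟩; rfl

theorem card_fun_ker_eq_comp_eq (r : Setoid X) (ι : S → X) (j : S → Y) :
    Nat.card {φ : X → Y // ker φ = r ∧ φ ∘ ι = j} =
      if r.comap ι = ker j then
        (Nat.card Y - Nat.card (range j)).descFactorial
          (Nat.card (Quotient r) - Nat.card (range j))
      else 0 := by
  have hκ : ker (Quotient.mk r ∘ ι) = r.comap ι := comap_eq.symm
  rw [Nat.card_congr ((Equiv.subtypeSubtypeEquivSubtypeInter _ _).symm.trans
      (Equiv.subtypeEquiv (p := fun φ => φ.1 ∘ ι = j)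
        (q := fun ψ : Quotient r ↪ Y => ⇑ψ ∘ (Quotient.mk r ∘ ι) = j)
        (kerEqEquivEmbedding r) fun _ => Iff.rfl)),
    card_embedding_comp_eq, hκ]
  split_ifs with h
  · rw [card_range_eq_of_ker_eq (hκ.trans h)]
  · rfl

theorem card_fun_comp_eq_and_ker (ι : S → X) (j : S → Y) (P : Setoid X → Prop) :
    Nat.card {φ : X → Y // φ ∘ ι = j ∧ P (ker φ)} =
      ∑ r : Setoid X with P r ∧ r.comap ι = ker j,
        (Nat.card Y - Nat.card (range j)).descFactorial
          (Nat.card (Quotient r) - Nat.card (range j)) := by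
  let e : {φ : X → Y // φ ∘ ι = j ∧ P (ker φ)} ≃
      Σ r : {r : Setoid X // P r}, {φ : X → Y // ker φ = r ∧ φ ∘ ι = j} :=
    { toFun φ := ⟨⟨ker φ.1, φ.2.2⟩, φ.1, rfl, φ.2.1⟩
      invFun p := ⟨p.2, p.2.2.2, by rw [p.2.2.1]; exact p.1.2⟩
      left_inv _ := rfl
      right_inv p := Sigma.subtype_ext (Subtype.ext p.2.2.1) rfl }
  rw [Nat.card_congr e, Nat.card_sigma,
    ← Finset.sum_subtype {r | P r} (fun _ => Finset.mem_filter_univ _)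
      (fun r => Nat.card {φ : X → Y // ker φ = r ∧ φ ∘ ι = j}),
    Finset.sum_filter, Finset.sum_filter]
  simp only [ite_and, card_fun_ker_eq_comp_eq]

end Counting

namespace Recollement

variable {U V W : Type}

def glue (E : Recollement U W) : U ⊕ W → E.C := Sum.elim E.u E.v

theorem glue_surjective (E : Recollement U W) : Surjective E.glue := fun c =>
  (E.covers c).elim (fun ⟨x, hx⟩ => ⟨.inl x, hx⟩) fun ⟨y, hy⟩ => ⟨.inr y, hy⟩

theorem equivalent_iff_ker_glue_eq {E E' : Recollement U W} :
    E.Equivalent E' ↔ ker E.glue = ker E'.glue := by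
  constructor
  · rintro ⟨e, hu, hv⟩
    have : ⇑e.toEmbedding ∘ E.glue = E'.glue := funext (Sum.rec hu hv)
    rw [← this, ker_embedding_comp]
  · intro h
    let q := quotientKerEquivOfSurjective _ E.glue_surjective
    let e := q.symm.trans <| (Quotient.congrRight fun a b => by rw [h]).trans
      (quotientKerEquivOfSurjective _ E'.glue_surjective)
    have he : ∀ s, e (E.glue s) = E'.glue s := fun s => by
      have hq : q.symm (E.glue s) = ⟦s⟧ := q.symm_apply_eq.2 rfl
      simp only [e, Equiv.trans_apply, hq]
      rfl
    exact ⟨e, fun x => he (.inl x), fun y => he (.inr y)⟩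

noncomputable def ofEmbeddings [Finite U] [Finite W] {Y : Type} (f : U ↪ Y) (g : W ↪ Y) :
    Recollement U W where
  C := range (Sum.elim f g)
  fintypeC := Fintype.ofFinite _
  u := ⟨fun x => ⟨f x, .inl x, rfl⟩, fun _ _ h => f.injective (congrArg Subtype.val h)⟩
  v := ⟨fun y => ⟨g y, .inr y, rfl⟩, fun _ _ h => g.injective (congrArg Subtype.val h)⟩
  covers := by
    rintro ⟨_, (x | y), rfl⟩
    exacts [.inl ⟨x, rfl⟩, .inr ⟨y, rfl⟩]

theorem ker_glue_ofEmbeddings [Finite U] [Finite W] {Y : Type} (f : U ↪ Y) (g : W ↪ Y) :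
    ker (ofEmbeddings f g).glue = ker (Sum.elim f g) :=
  (ker_embedding_comp (Embedding.subtype _) _).symm.trans
    (congrArg ker (funext (Sum.rec (fun _ => rfl) fun _ => rfl)))

end Recollement

section RecMap

variable {U V W : Type} [Fintype U] [Fintype V] [Fintype W] {n : ℕ}

theorem recMap_single (r : Recollement U V) (f : U ↪ Fin n) :
    recMap U V n r (Finsupp.single f 1) =
      ∑ h : r.C ↪ Fin n,
        if ∀ x, h (r.u x) = f x then Finsupp.single (r.v.trans h) 1 else 0 := by
  rw [recMap, Finsupp.lift_apply, Finsupp.sum_single_index (by simp), one_smul]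

theorem recMap_single_apply_eq_card (r : Recollement U V) (f : U ↪ Fin n) (g : V ↪ Fin n) :
    recMap U V n r (Finsupp.single f 1) g =
      Nat.card {h : r.C ↪ Fin n // ⇑h ∘ r.glue = Sum.elim f g} := by
  have hglue : ∀ h : r.C ↪ Fin n,
      ⇑h ∘ r.glue = Sum.elim f g ↔ (∀ x, h (r.u x) = f x) ∧ r.v.trans h = g := fun h => by
    rw [funext_iff, Sum.forall, Embedding.ext_iff]; rfl
  simp only [recMap_single, Finsupp.finsetSum_apply,
    apply_ite (fun φ : (V ↪ Fin n) →₀ ℂ => φ g), Finsupp.single_apply, Finsupp.coe_zero,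
    Pi.zero_apply, ← ite_and, Finset.sum_boole, Nat.card_eq_fintype_card, Fintype.card_subtype,
    hglue]

theorem recMap_single_apply (r : Recollement U V) (f : U ↪ Fin n) (g : V ↪ Fin n) :
    recMap U V n r (Finsupp.single f 1) g = if ker r.glue = ker (Sum.elim f g) then 1 else 0 := by
  rw [recMap_single_apply_eq_card, card_embedding_comp_eq, r.glue_surjective.range_eq,
    Nat.card_univ, Nat.sub_self, Nat.descFactorial_zero]
  split_ifs <;> simp

def IsGluing (C : Recollement U V) (D : Recollement V W) (r : Setoid (C.C ⊕ D.C)) : Prop :=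
  r.comap Sum.inl = ⊥ ∧ r.comap Sum.inr = ⊥ ∧ ∀ y, r (.inl (C.v y)) (.inr (D.u y))

theorem recMap_comp_single_apply (C : Recollement U V) (D : Recollement V W) (f : U ↪ Fin n)
    (g : W ↪ Fin n) : recMap V W n D (recMap U V n C (Finsupp.single f 1)) g =
      Nat.card {φ : C.C ⊕ D.C → Fin n //
        φ ∘ Sum.map C.u D.v = Sum.elim f g ∧ IsGluing C D (ker φ)} := by
  let e : {φ : C.C ⊕ D.C → Fin n //
        φ ∘ Sum.map C.u D.v = Sum.elim f g ∧ IsGluing C D (ker φ)} ≃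
      Σ h : {h : C.C ↪ Fin n // ∀ x, h (C.u x) = f x},
        {k : D.C ↪ Fin n // ⇑k ∘ D.glue = Sum.elim (C.v.trans h) g} :=
    { toFun φ := ⟨⟨⟨φ.1 ∘ .inl, ker_eq_bot_iff.1 φ.2.2.1⟩,
          fun x => congrFun φ.2.1 (.inl x)⟩,
        ⟨φ.1 ∘ .inr, ker_eq_bot_iff.1 φ.2.2.2.1⟩,
        funext (Sum.rec (fun y => (φ.2.2.2.2 y).symm) fun w => congrFun φ.2.1 (.inr w))⟩
      invFun p := ⟨Sum.elim p.1.1 p.2.1,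
        funext (Sum.rec p.1.2 fun w => congrFun p.2.2 (.inr w)),
        ker_eq_bot_iff.2 p.1.1.injective, ker_eq_bot_iff.2 p.2.1.injective,
        fun y => (congrFun p.2.2 (.inl y)).symm⟩
      left_inv φ := Subtype.ext (Sum.elim_comp_inl_inr φ.1)
      right_inv _ := rfl }
  rw [Nat.card_congr e, Nat.card_sigma, recMap_single, map_sum,
    Finsupp.finsetSum_apply, Nat.cast_sum, ← Finset.sum_subtype {h | ∀ x, h (C.u x) = f x}
    (fun _ => Finset.mem_filter_univ _)
    (fun h => (Nat.card {k : D.C ↪ Fin n // ⇑k ∘ D.glue = Sum.elim (C.v.trans h) g} : ℂ)),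
    Finset.sum_filter]
  refine Finset.sum_congr rfl fun h _ => ?_
  split_ifs <;> simp [recMap_single_apply_eq_card]

end RecMap

section CompositionPolynomial

open Polynomial

theorem eval_descPochhammer_comp_X_sub_natCast {e n : ℕ} (k : ℕ) (h : e ≤ n) :
    ((descPochhammer ℤ k).comp (X - (e : ℤ[X]))).eval (n : ℤ) = (n - e).descFactorial k := by
  rw [eval_comp, eval_sub, eval_X, eval_natCast, ← Nat.cast_sub h,
    descPochhammer_eval_eq_descFactorial]

variable {U V W : Type} [Fintype U] [Fintype V] [Fintype W]

noncomputable def compCoeffPoly (C : Recollement U V) (D : Recollement V W)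
    (E : Recollement U W) : ℤ[X] :=
  ∑ r : Setoid (C.C ⊕ D.C) with IsGluing C D r ∧ r.comap (Sum.map C.u D.v) = ker E.glue,
    (descPochhammer ℤ (Nat.card (Quotient r) - Nat.card E.C)).comp (X - (Nat.card E.C : ℤ[X]))

theorem eval_compCoeffPoly (C : Recollement U V) (D : Recollement V W) (E : Recollement U W)
    {n : ℕ} (f : U ↪ Fin n) (g : W ↪ Fin n) (hE : ker E.glue = ker (Sum.elim f g)) :
    (((compCoeffPoly C D E).eval (n : ℤ) : ℤ) : ℂ) =
      recMap V W n D (recMap U V n C (Finsupp.single f 1)) g := by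
  have hcard : Nat.card E.C = Nat.card (range (Sum.elim f g)) := by
    rw [← card_range_eq_of_ker_eq hE, E.glue_surjective.range_eq, Nat.card_univ]
  have hn : Nat.card E.C ≤ n :=
    hcard.trans_le ((Finite.card_subtype_le _).trans_eq (Nat.card_fin n))
  rw [recMap_comp_single_apply, card_fun_comp_eq_and_ker, compCoeffPoly, eval_finsetSum,
    Nat.card_fin, ← hcard, ← hE]
  simp only [eval_descPochhammer_comp_X_sub_natCast _ hn]
  push_cast
  rfl

end CompositionPolynomial

/-- Let `U, V, W` be finite sets and `R` a (finite) set of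
representatives of the equivalence classes of recollements of `(U, W)`.  For any
recollement `C` of `(U, V)` and any recollement `D` of `(V, W)` there are integer
polynomials `P^E_{C,D}`, indexed by `E ∈ R`, such that for every `n ∈ ℕ` the composite
`(D) ∘ (C) : ℂ[Inj(U, Fin n)] → ℂ[Inj(W, Fin n)]` equals
`∑_{E ∈ R} P^E_{C,D}(n) · (E)`. -/
theorem stmt7 (U V W : Type) [Fintype U] [Fintype V] [Fintype W]
    (R : Set (Recollement U W)) (hRfin : R.Finite)
    (hR : ∀ P : Recollement U W, ∃! r : R, P.Equivalent r.1)
    (C : Recollement U V) (D : Recollement V W) :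
    ∃ P : Recollement U W → Polynomial ℤ,
      ∀ n : ℕ,
        (recMap V W n D).comp (recMap U V n C) =
          ∑ E ∈ hRfin.toFinset, (((P E).eval (n : ℤ) : ℤ) : ℂ) • recMap U W n E := by
  refine ⟨compCoeffPoly C D, fun n => Finsupp.lhom_ext' fun f =>
    LinearMap.ext_ring <| Finsupp.ext fun g => ?_⟩
  obtain ⟨E₀, hE₀, hE₀_unique⟩ := hR (Recollement.ofEmbeddings f g)
  rw [Recollement.equivalent_iff_ker_glue_eq, Recollement.ker_glue_ofEmbeddings] at hE₀
  have hR_ker : ∀ E ∈ hRfin.toFinset, ker E.glue = ker (Sum.elim f g) → E = E₀ :=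
    fun E hE hker => congrArg Subtype.val <| hE₀_unique ⟨E, hRfin.mem_toFinset.1 hE⟩ <|
      Recollement.equivalent_iff_ker_glue_eq.2 <| by rw [Recollement.ker_glue_ofEmbeddings, hker]
  simp only [LinearMap.comp_apply, Finsupp.lsingle_apply, LinearMap.coe_sum, Finset.sum_apply,
    LinearMap.smul_apply, Finsupp.finsetSum_apply, Finsupp.smul_apply, recMap_single_apply,
    smul_eq_mul, mul_ite, mul_one, mul_zero]
  rw [Finset.sum_eq_single_of_mem E₀.1 (hRfin.mem_toFinset.2 E₀.2)
    fun E hE hne => if_neg fun h => hne (hR_ker E hE h), if_pos hE₀.symm,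
    eval_compCoeffPoly C D E₀ f g hE₀.symm]
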